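/- Off-policy policy gradient: if trajectories are sampled from a positive-probability autoregressive policy π_old, then the derivative of E_{π_θ}[R] equals ∑_{t=1}^T E_{o_{1:t}∼π_old}[ρ_{1:t} · ∂_θ log π_θ(o_t|o_{<t}) · A^π(o_t; o_{<t})], where ρ_{1:t} = ∏_{i=1}^t π_θ(o_i|o_{<i}) / π_old(o_i|o_{<i}). -/

import Mathlib

/-- Probability of the length-`n` sequence `s` under the autoregressive policy `π`. -/
noncomputable def seqProb {O : Type*} (π : List O → O → ℝ) {n : ℕ} (s : Fin n → O) : ℝ :=
  ∏ i : Fin n, π ((List.ofFn s).take i) (s i)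

/-- Conditional probability of the continuation `c` after the prefix `p` under `π`. -/
noncomputable def contProb {O : Type*} (π : List O → O → ℝ) (p : List O) {k : ℕ}
    (c : Fin k → O) : ℝ :=
  ∏ i : Fin k, π (p ++ (List.ofFn c).take i) (c i)

/-- `Q^π(o_t; o_{<t}) = E_{o_{t+1:T}∼π(·|o_{1:t})}[∑_{i=t}^T r_i(o_{1:i})]` for the
length-`t` prefix `p`. -/
noncomputable def Qval {O : Type*} [Fintype O] (π : List O → O → ℝ) (r : List O → ℝ)
    (T : ℕ) (p : List O) : ℝ :=
  ∑ c : Fin (T - p.length) → O,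
    contProb π p c *
      (r p + ∑ i : Fin (T - p.length), r (p ++ (List.ofFn c).take (i + 1)))

/-- `V^π(o_{<t}) = E_{o_t∼π(·|o_{<t})}[Q^π(o_t; o_{<t})]`. -/
noncomputable def Vval {O : Type*} [Fintype O] (π : List O → O → ℝ) (r : List O → ℝ)
    (T : ℕ) (h : List O) : ℝ :=
  ∑ o : O, π h o * Qval π r T (h ++ [o])

/-- The prefix importance ratio `ρ_{1:t}(s) = ∏_{i≤t} π(s_i|s_{<i}) / π_old(s_i|s_{<i})`. -/
noncomputable def prefixRatio {O : Type*} (π πold : List O → O → ℝ) {t : ℕ}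
    (s : Fin t → O) : ℝ :=
  ∏ i : Fin t, π ((List.ofFn s).take i) (s i) / πold ((List.ofFn s).take i) (s i)

/-!
The importance weights telescope along a trajectory, `π_old(s) · ρ(s) = π_θ(s)`, so the
off-policy formula is the on-policy policy gradient `∑_t E_{π_θ}[∂_θ log π_θ(o_t|o_{<t}) · A^π]`.
That one is proved by induction on the horizon, conditioning on the first token `o`:
`E_{π_θ}[R] = ∑_o π_θ(o) Q^π(o)`. By the product rule the derivative splits into
`∑_o ∂_θ π_θ(o) · Q^π(o)`, where the baseline `V^π` may be subtracted because `∑_o ∂_θ π_θ(o) = 0`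
(the `t = 1` term), and `∑_o π_θ(o) · ∂_θ Q^π(o)`, which is the induction hypothesis for the
policy and rewards shifted by `o` (the terms `t ≥ 2`).
-/

open Finset

section Sequences

variable {α : Type*}

theorem sum_pi_fin_succ [Fintype α] {M : Type*} [AddCommMonoid M] {n : ℕ}
    (f : (Fin (n + 1) → α) → M) :
    ∑ s, f s = ∑ a : α, ∑ s : Fin n → α, f (Fin.cons a s) := by
  rw [← (Fin.consEquiv fun _ => α).sum_comp, Fintype.sum_prod_type]
  rfl

theorem seqProb_cons (π : List α → α → ℝ) (a : α) {n : ℕ} (s : Fin n → α) :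
    seqProb π (Fin.cons a s) = π [] a * seqProb (fun h => π (a :: h)) s := by
  simp [seqProb, Fin.prod_univ_succ]

theorem seqProb_mul_prefixRatio (π πold : List α → α → ℝ) (hold : ∀ h a, πold h a ≠ 0)
    {n : ℕ} (s : Fin n → α) :
    seqProb πold s * prefixRatio π πold s = seqProb π s := by
  rw [seqProb, prefixRatio, ← prod_mul_distrib]
  exact prod_congr rfl fun i _ => mul_div_cancel₀ _ (hold _ _)

variable [Fintype α]

theorem sum_seqProb (n : ℕ) (π : List α → α → ℝ) (hsum : ∀ h, ∑ a, π h a = 1) :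
    ∑ s : Fin n → α, seqProb π s = 1 := by
  induction n generalizing π with
  | zero => simp [seqProb]
  | succ n ih =>
    simp only [sum_pi_fin_succ, seqProb_cons, ← mul_sum]
    simp [ih _ fun _ => hsum _, hsum]

theorem sum_seqProb_mul_add {n : ℕ} (π : List α → α → ℝ) (hsum : ∀ h, ∑ a, π h a = 1)
    (c : ℝ) (f : (Fin n → α) → ℝ) :
    ∑ s, seqProb π s * (c + f s) = c + ∑ s, seqProb π s * f s := by
  simp [mul_add, sum_add_distrib, ← sum_mul, sum_seqProb n π hsum]

end Sequences

section ValueFunctions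

variable {α : Type*} [Fintype α]

theorem Qval_cons (π : List α → α → ℝ) (r : List α → ℝ) (T : ℕ) (a : α) (l : List α) :
    Qval π r (T + 1) (a :: l) = Qval (fun h => π (a :: h)) (fun h => r (a :: h)) T l := by
  unfold Qval
  rw [show T + 1 - (a :: l).length = T - l.length by simp]
  rfl

theorem Vval_cons (π : List α → α → ℝ) (r : List α → ℝ) (T : ℕ) (a : α) (l : List α) :
    Vval π r (T + 1) (a :: l) = Vval (fun h => π (a :: h)) (fun h => r (a :: h)) T l := by
  simp only [Vval, List.cons_append, Qval_cons]

noncomputable def expectedReturn (π : List α → α → ℝ) (r : List α → ℝ) (T : ℕ) : ℝ :=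
  ∑ s : Fin T → α, seqProb π s * ∑ i : Fin T, r ((List.ofFn s).take (i + 1))

theorem Qval_singleton (π : List α → α → ℝ) (hsum : ∀ h, ∑ a, π h a = 1) (r : List α → ℝ)
    (T : ℕ) (a : α) :
    Qval π r (T + 1) [a] = r [a] + expectedReturn (fun h => π (a :: h)) (fun h => r (a :: h)) T :=
  (Qval_cons π r T a []).trans (sum_seqProb_mul_add _ (fun _ => hsum _) _ _)

theorem expectedReturn_succ (π : List α → α → ℝ) (hsum : ∀ h, ∑ a, π h a = 1)
    (r : List α → ℝ) (T : ℕ) :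
    expectedReturn π r (T + 1) = ∑ a, π [] a * Qval π r (T + 1) [a] := by
  simp only [expectedReturn, sum_pi_fin_succ, Qval_singleton π hsum, seqProb_cons,
    List.ofFn_cons, Fin.sum_univ_succ, mul_assoc, ← mul_sum]
  simp [List.take_succ_cons, Fin.val_succ, sum_seqProb_mul_add _ (fun _ => hsum _)]

end ValueFunctions

section PolicyGradient

variable {α : Type*} [Fintype α]

theorem sum_deriv_eq_zero (π : ℝ → α → ℝ) (hsum : ∀ θ, ∑ a, π θ a = 1) {θ : ℝ}
    (hdiff : ∀ a, DifferentiableAt ℝ (fun θ => π θ a) θ) :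
    ∑ a, deriv (fun θ => π θ a) θ = 0 := by
  have hconst : HasDerivAt (fun θ => ∑ a, π θ a) (∑ a, deriv (fun θ => π θ a) θ) θ :=
    HasDerivAt.fun_sum fun a _ => (hdiff a).hasDerivAt
  simp only [hsum] at hconst
  exact hconst.unique (hasDerivAt_const θ 1)

/-- `E_{o_{1:t+1}∼π_θ}[∂_θ log π_θ(o_{t+1}|o_{≤t}) · A^π(o_{t+1}; o_{≤t})]`: the step index `t`
is 0-based. -/
noncomputable def stepGradient (π : ℝ → List α → α → ℝ) (r : List α → ℝ) (T : ℕ) (θ : ℝ)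
    (t : ℕ) : ℝ :=
  ∑ s : Fin (t + 1) → α,
    seqProb (π θ) s *
      deriv (fun θ' => Real.log (π θ' ((List.ofFn s).take t) (s (Fin.last t)))) θ *
      (Qval (π θ) r T (List.ofFn s) - Vval (π θ) r T ((List.ofFn s).take t))

theorem stepGradient_zero (π : ℝ → List α → α → ℝ) (r : List α → ℝ) (T : ℕ) {θ : ℝ}
    (hne : ∀ h a, π θ h a ≠ 0) (hdiff : ∀ h a, DifferentiableAt ℝ (fun θ => π θ h a) θ) :
    stepGradient π r T θ 0
      = ∑ a, deriv (fun θ => π θ [] a) θ * (Qval (π θ) r T [a] - Vval (π θ) r T []) := by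
  rw [stepGradient, ← (Equiv.funUnique (Fin 1) α).symm.sum_comp]
  refine sum_congr rfl fun a _ => ?_
  have hscore :
      deriv (fun θ => Real.log (π θ [] a)) θ * π θ [] a = deriv (fun θ => π θ [] a) θ := by
    rw [deriv.log (hdiff [] a) (hne [] a), div_mul_cancel₀ _ (hne [] a)]
  simp [seqProb, ← hscore, mul_comm]

theorem stepGradient_succ (π : ℝ → List α → α → ℝ) (r : List α → ℝ) (T : ℕ) (θ : ℝ) (t : ℕ) :
    stepGradient π r (T + 1) θ (t + 1)
      = ∑ a, π θ [] a *
          stepGradient (fun θ h => π θ (a :: h)) (fun h => r (a :: h)) T θ t := by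
  rw [stepGradient, sum_pi_fin_succ]
  simp only [stepGradient, mul_sum]
  refine sum_congr rfl fun a _ => sum_congr rfl fun s _ => ?_
  rw [seqProb_cons, List.ofFn_cons, List.take_succ_cons, ← Fin.succ_last, Fin.cons_succ,
    Qval_cons, Vval_cons]
  ring

theorem hasDerivAt_expectedReturn (T : ℕ) (π : ℝ → List α → α → ℝ) (r : List α → ℝ)
    (hsum : ∀ θ h, ∑ a, π θ h a = 1) {θ : ℝ} (hne : ∀ h a, π θ h a ≠ 0)
    (hdiff : ∀ h a, DifferentiableAt ℝ (fun θ => π θ h a) θ) :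
    HasDerivAt (fun θ => expectedReturn (π θ) r T) (∑ t : Fin T, stepGradient π r T θ t) θ := by
  induction T generalizing π r with
  | zero => simpa [expectedReturn] using hasDerivAt_const θ (0 : ℝ)
  | succ T ih =>
    have hQ (a : α) : HasDerivAt (fun θ => Qval (π θ) r (T + 1) [a])
        (∑ t : Fin T, stepGradient (fun θ h => π θ (a :: h)) (fun h => r (a :: h)) T θ t) θ := by
      simp only [fun θ => Qval_singleton (π θ) (hsum θ)]
      exact (ih (fun θ h => π θ (a :: h)) (fun h => r (a :: h)) (fun θ h => hsum θ (a :: h))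
        (fun h => hne (a :: h)) (fun h => hdiff (a :: h))).const_add (r [a])
    have hJ := HasDerivAt.fun_sum fun a (_ : a ∈ univ) => (hdiff [] a).hasDerivAt.fun_mul (hQ a)
    rw [show (fun θ => expectedReturn (π θ) r (T + 1)) = _ from
      funext fun θ => expectedReturn_succ (π θ) (hsum θ) r T]
    refine hJ.congr_deriv ?_
    have hbaseline := sum_deriv_eq_zero (fun θ a => π θ [] a) (fun θ => hsum θ []) (hdiff [])
    rw [Fin.sum_univ_succ, Fin.val_zero, stepGradient_zero π r _ hne hdiff]
    simp only [Fin.val_succ, stepGradient_succ, sum_add_distrib, mul_sub, sum_sub_distrib,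
      ← sum_mul, hbaseline, zero_mul, sub_zero, mul_sum]
    rw [sum_comm]

end PolicyGradient

theorem off_policy_policy_gradient_general {O : Type*} [Fintype O]
    (π : ℝ → List O → O → ℝ) (πold : List O → O → ℝ)
    (hpos : ∀ θ h o, 0 < π θ h o)
    (hsum : ∀ θ h, ∑ o, π θ h o = 1)
    (hdiff : ∀ h o, Differentiable ℝ (fun θ => π θ h o))
    (holdpos : ∀ h o, 0 < πold h o)
    (T : ℕ) (r : List O → ℝ) (θ : ℝ) :
    deriv (fun θ' => ∑ s : Fin T → O,
        seqProb (π θ') s * ∑ i : Fin T, r ((List.ofFn s).take (i + 1))) θ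
      = ∑ t : Fin T, ∑ s : Fin (t + 1) → O,
          seqProb πold s *
            (prefixRatio (π θ) πold s *
              deriv (fun θ' => Real.log (π θ' ((List.ofFn s).take t) (s (Fin.last t)))) θ *
              (Qval (π θ) r T (List.ofFn s) - Vval (π θ) r T ((List.ofFn s).take t))) := by
  simp only [← mul_assoc, seqProb_mul_prefixRatio _ _ fun h o => (holdpos h o).ne']
  exact (hasDerivAt_expectedReturn T π r hsum (fun h o => (hpos θ h o).ne')
    fun h o => hdiff h o θ).deriv

/-- Off-policy policy gradient: if trajectories are sampled from a positive-probability
autoregressive policy `π_old`, then the derivative of `E_{π_θ}[R]`, `R = ∑_t r_t`, equals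
`∑_{t=1}^T E_{o_{1:t}∼π_old}[ρ_{1:t} · ∂_θ log π_θ(o_t|o_{<t}) · A^π(o_t; o_{<t})]`, with
`ρ_{1:t} = ∏_{i=1}^t π_θ(o_i|o_{<i}) / π_old(o_i|o_{<i})` and `A^π = Q^π − V^π` under `π_θ`. -/
theorem off_policy_policy_gradient {O : Type*} [Fintype O]
    (π : ℝ → List O → O → ℝ) (πold : List O → O → ℝ)
    (hpos : ∀ θ h o, 0 < π θ h o)
    (hsum : ∀ θ h, ∑ o, π θ h o = 1)
    (hdiff : ∀ h o, Differentiable ℝ (fun θ => π θ h o))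
    (holdpos : ∀ h o, 0 < πold h o)
    (hold1 : ∀ h, ∑ o, πold h o = 1)
    (T : ℕ) (r : List O → ℝ) (θ : ℝ) :
    deriv (fun θ' => ∑ s : Fin T → O,
        seqProb (π θ') s * ∑ i : Fin T, r ((List.ofFn s).take (i + 1))) θ
      = ∑ t : Fin T, ∑ s : Fin (t + 1) → O,
          seqProb πold s *
            (prefixRatio (π θ) πold s *
              deriv (fun θ' => Real.log (π θ' ((List.ofFn s).take t) (s (Fin.last t)))) θ *
              (Qval (π θ) r T (List.ofFn s) - Vval (π θ) r T ((List.ofFn s).take t))) :=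
  off_policy_policy_gradient_general π πold hpos hsum hdiff holdpos T r θ
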